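/- arXiv:2008.03120 — 3 statements merged into one kernel-verified Lean document; each statement's English description precedes it below -/
import Mathlib

section
/- Let n ≥ 2, let Ω ⊂ ℝⁿ be a bounded open set, and let V₁, V₂ : ℝⁿ → ℂ be bounded measurable functions vanishing outside Ω. If ∫_Ω (V₁ − V₂)(x) u₁(x) u₂(x) dx = 0 for every pair u₁, u₂ of smooth complex-valued harmonic functions on ℝⁿ, then V₁ = V₂ almost everywhere in Ω. -/
open MeasureTheory

/-- The (pointwise) Laplacian of a function `u : ℝⁿ → ℂ`, as the sum of its second
partial derivatives in the coordinate directions. -/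
noncomputable def laplacian {n : ℕ} (u : EuclideanSpace ℝ (Fin n) → ℂ)
    (x : EuclideanSpace ℝ (Fin n)) : ℂ :=
  ∑ i : Fin n, fderiv ℝ (fun y => fderiv ℝ u y (EuclideanSpace.single i 1)) x
    (EuclideanSpace.single i 1)

/-- A smooth complex-valued function on `ℝⁿ` that is harmonic, i.e. `Δu = 0` everywhere. -/
def Harmonic {n : ℕ} (u : EuclideanSpace ℝ (Fin n) → ℂ) : Prop :=
  ContDiff ℝ (⊤ : ℕ∞) u ∧ ∀ x, laplacian u x = 0

open FourierTransform Complex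
open scoped RealInnerProductSpace

/-!
For `ζ = p + i q` with `p ⊥ q` and `‖p‖ = ‖q‖` we have `ζ · ζ = 0`, so Calderón's exponential
`x ↦ exp (ζ · x)` is harmonic. In dimension `n ≥ 2`, every frequency `w` can be written as
`-2π i w = ζ₁ + ζ₂` with `ζ₁ = p + i q`, `ζ₂ = -p + i q`, where `q = -π w` and `p ⊥ w`,
`‖p‖ = π ‖w‖`. Testing the hypothesis against the two exponentials therefore shows that the
Fourier transform of the integrable function `V₁ - V₂` vanishes identically, and Fourier
uniqueness gives `V₁ = V₂` almost everywhere.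
-/

section FourierUniqueness

variable {V E : Type*} [NormedAddCommGroup V] [InnerProductSpace ℝ V] [FiniteDimensional ℝ V]
  [MeasurableSpace V] [BorelSpace V] [NormedAddCommGroup E] [NormedSpace ℂ E] [CompleteSpace E]

theorem Real.integral_fourier_smul_eq_of_integrable {g : V → ℂ} {f : V → E}
    (hg : Integrable g) (hf : Integrable f) :
    ∫ ξ, 𝓕 g ξ • f ξ = ∫ x, g x • 𝓕 f x := by
  have := VectorFourier.integral_fourierIntegral_smul_eq_flip (L := innerₗ V)
    Real.continuous_fourierChar continuous_inner hg hf
  rwa [flip_innerₗ] at this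

theorem MeasureTheory.Integrable.ae_eq_zero_of_fourier_eq_zero {f : V → E} (hf : Integrable f)
    (h : 𝓕 f = 0) : f =ᵐ[volume] 0 := by
  refine ae_eq_zero_of_integral_contDiff_smul_eq_zero hf.locallyIntegrable fun g hg hgc ↦ ?_
  let φ : SchwartzMap V ℂ :=
    (hgc.comp_left Complex.ofReal_zero).toSchwartzMap (ofRealCLM.contDiff.comp hg)
  calc ∫ x, g x • f x = ∫ x, 𝓕 (⇑(𝓕⁻ φ : SchwartzMap V ℂ)) x • f x := by
        congr with x
        rw [← SchwartzMap.fourier_coe, FourierInvPair.fourier_fourierInv_eq φ]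
        exact (Complex.coe_smul (g x) (f x)).symm
    _ = 0 := by
        rw [Real.integral_fourier_smul_eq_of_integrable (𝓕⁻ φ : SchwartzMap V ℂ).integrable hf, h]
        simp

end FourierUniqueness

theorem exists_inner_eq_zero_norm_eq {E : Type*} [NormedAddCommGroup E] [InnerProductSpace ℝ E]
    (hE : 2 ≤ Module.finrank ℝ E) (v : E) {r : ℝ} (hr : 0 ≤ r) :
    ∃ w : E, ⟪w, v⟫ = 0 ∧ ‖w‖ = r := by
  have : FiniteDimensional ℝ E := Module.finite_of_finrank_pos (by omega)
  have : Nontrivial (ℝ ∙ v)ᗮ := by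
    apply Module.nontrivial_of_finrank_pos (R := ℝ)
    have hv : Module.finrank ℝ (ℝ ∙ v) ≤ 1 := by
      simpa using finrank_span_le_card ({v} : Set E)
    have := (ℝ ∙ v).finrank_add_finrank_orthogonal
    omega
  obtain ⟨w, hw⟩ := exists_norm_eq (ℝ ∙ v)ᗮ hr
  exact ⟨w, Submodule.inner_left_of_mem_orthogonal (Submodule.mem_span_singleton_self v) w.2, hw⟩

section CalderonExponential

variable {E : Type*} [NormedAddCommGroup E] [InnerProductSpace ℝ E]

/-- The form `x ↦ ζ · x` for `ζ = p + i q`. -/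
noncomputable def calderonForm (p q : E) : E →L[ℝ] ℂ :=
  ofRealCLM ∘L innerSL ℝ p + I • ofRealCLM ∘L innerSL ℝ q

theorem calderonForm_apply (p q x : E) : calderonForm p q x = ⟪p, x⟫ + ⟪q, x⟫ * I := by
  simp [calderonForm, mul_comm]

theorem sum_calderonForm_sq {ι : Type*} [Fintype ι] (b : OrthonormalBasis ι ℝ E) (p q : E) :
    ∑ i, calderonForm p q (b i) ^ 2 = ((‖p‖ ^ 2 - ‖q‖ ^ 2 : ℝ) : ℂ) + 2 * (⟪p, q⟫ : ℂ) * I := by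
  have hsq : ∀ i, calderonForm p q (b i) ^ 2 = ((⟪p, b i⟫ * ⟪b i, p⟫ - ⟪q, b i⟫ * ⟪b i, q⟫ : ℝ) : ℂ)
      + 2 * ((⟪p, b i⟫ * ⟪b i, q⟫ : ℝ) : ℂ) * I := by
    intro i
    simp only [calderonForm_apply, real_inner_comm p (b i), real_inner_comm q (b i)]
    push_cast
    linear_combination (⟪q, b i⟫ : ℂ) ^ 2 * I_sq
  simp only [hsq, Finset.sum_add_distrib, ← Finset.sum_mul, ← Finset.mul_sum, ← ofReal_sum,
    Finset.sum_sub_distrib, b.sum_inner_mul_inner, real_inner_self_eq_norm_sq]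

theorem exp_calderonForm_mul_exp_calderonForm_neg (p q x : E) :
    exp (calderonForm p q x) * exp (calderonForm (-p) q x) = exp (2 * ⟪q, x⟫ * I) := by
  rw [← exp_add, calderonForm_apply, calderonForm_apply, inner_neg_left]
  push_cast
  ring_nf

end CalderonExponential

section Laplacian

variable {n : ℕ}

theorem laplacian_exp_comp (L : EuclideanSpace ℝ (Fin n) →L[ℝ] ℂ) (x : EuclideanSpace ℝ (Fin n)) :
    laplacian (fun y ↦ exp (L y)) x = exp (L x) * ∑ i, L (EuclideanSpace.single i 1) ^ 2 := by
  have hexp : ∀ y, HasFDerivAt (fun y ↦ exp (L y)) (exp (L y) • L) y := fun y ↦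
    (hasDerivAt_exp _).comp_hasFDerivAt y L.hasFDerivAt
  have hderiv : ∀ v, (fun y ↦ fderiv ℝ (fun z ↦ exp (L z)) y v) = fun y ↦ exp (L y) * L v :=
    fun v ↦ funext fun y ↦ by simp [(hexp y).fderiv]
  simp only [laplacian, hderiv, ((hexp x).mul_const _).fderiv, Finset.mul_sum]
  simp [sq, mul_left_comm]

theorem harmonic_exp_comp (L : EuclideanSpace ℝ (Fin n) →L[ℝ] ℂ)
    (hL : ∑ i, L (EuclideanSpace.single i 1) ^ 2 = 0) : Harmonic fun y ↦ exp (L y) :=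
  ⟨contDiff_exp.comp L.contDiff, fun x ↦ by rw [laplacian_exp_comp, hL, mul_zero]⟩

theorem harmonic_exp_calderonForm {p q : EuclideanSpace ℝ (Fin n)} (hpq : ⟪p, q⟫ = 0)
    (hnorm : ‖p‖ = ‖q‖) : Harmonic fun x ↦ exp (calderonForm p q x) := by
  refine harmonic_exp_comp _ ?_
  simpa [← EuclideanSpace.basisFun_apply, hpq, hnorm] using
    sum_calderonForm_sq (EuclideanSpace.basisFun (Fin n) ℝ) p q

end Laplacian

theorem fourier_eq_zero_of_integral_mul_harmonic_mul_harmonic_eq_zero {n : ℕ} (hn : 2 ≤ n)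
    {W : EuclideanSpace ℝ (Fin n) → ℂ}
    (h : ∀ u₁ u₂, Harmonic u₁ → Harmonic u₂ → ∫ x, W x * u₁ x * u₂ x = 0) : 𝓕 W = 0 := by
  funext w
  obtain ⟨p, hpw, hp⟩ :=
    exists_inner_eq_zero_norm_eq (by simpa using hn) w (by positivity : 0 ≤ Real.pi * ‖w‖)
  set q := -(Real.pi • w)
  have hpq : ⟪p, q⟫ = 0 := by simp [q, inner_smul_right, hpw]
  have hnorm : ‖p‖ = ‖q‖ := by simp [q, norm_smul, hp, abs_of_pos Real.pi_pos]
  have hu₁ := harmonic_exp_calderonForm hpq hnorm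
  have hu₂ := harmonic_exp_calderonForm (p := -p) (q := q) (by simp [inner_neg_left, hpq])
    (by rwa [norm_neg])
  rw [Real.fourier_eq, Pi.zero_apply, ← h _ _ hu₁ hu₂]
  congr with x
  rw [mul_assoc, exp_calderonForm_mul_exp_calderonForm_neg, Circle.smul_def,
    Real.fourierChar_apply, smul_eq_mul, mul_comm]
  congr 3
  simp only [q, inner_neg_left, real_inner_smul_left, real_inner_comm x w]
  push_cast
  ring

theorem stmt0_general {n : ℕ} (hn : 2 ≤ n) (Ω : Set (EuclideanSpace ℝ (Fin n)))
    (hΩb : Bornology.IsBounded Ω)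
    (V₁ V₂ : EuclideanSpace ℝ (Fin n) → ℂ)
    (hV₁m : Measurable V₁) (hV₂m : Measurable V₂)
    (hV₁b : ∃ C, ∀ x, ‖V₁ x‖ ≤ C) (hV₂b : ∃ C, ∀ x, ‖V₂ x‖ ≤ C)
    (hV₁s : ∀ x ∉ Ω, V₁ x = 0) (hV₂s : ∀ x ∉ Ω, V₂ x = 0)
    (h : ∀ u₁ u₂ : EuclideanSpace ℝ (Fin n) → ℂ, Harmonic u₁ → Harmonic u₂ →
      ∫ x in Ω, (V₁ x - V₂ x) * u₁ x * u₂ x = 0) :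
    ∀ᵐ x ∂(volume.restrict Ω), V₁ x = V₂ x := by
  obtain ⟨C₁, hC₁⟩ := hV₁b
  obtain ⟨C₂, hC₂⟩ := hV₂b
  set W := fun x ↦ V₁ x - V₂ x
  have hWΩ : ∀ x ∉ Ω, W x = 0 := fun x hx ↦ by simp [W, hV₁s x hx, hV₂s x hx]
  have hW : Integrable W := by
    rw [← integrableOn_iff_integrable_of_support_subset (Function.support_subset_iff'.2 hWΩ)]
    refine Measure.integrableOn_of_bounded hΩb.measure_lt_top.ne
      (hV₁m.sub hV₂m).aestronglyMeasurable (M := C₁ + C₂) (ae_of_all _ fun x ↦ ?_)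
    exact (norm_sub_le _ _).trans (add_le_add (hC₁ x) (hC₂ x))
  have h𝓕W : 𝓕 W = 0 := fourier_eq_zero_of_integral_mul_harmonic_mul_harmonic_eq_zero hn
    fun u₁ u₂ hu₁ hu₂ ↦ by
      rw [← setIntegral_eq_integral_of_forall_compl_eq_zero fun x hx ↦ by simp [hWΩ x hx]]
      exact h u₁ u₂ hu₁ hu₂
  filter_upwards [ae_restrict_of_ae (hW.ae_eq_zero_of_fourier_eq_zero h𝓕W)] with x hx
  exact sub_eq_zero.mp hx

theorem stmt0 {n : ℕ} (hn : 2 ≤ n) (Ω : Set (EuclideanSpace ℝ (Fin n)))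
    (hΩo : IsOpen Ω) (hΩb : Bornology.IsBounded Ω)
    (V₁ V₂ : EuclideanSpace ℝ (Fin n) → ℂ)
    (hV₁m : Measurable V₁) (hV₂m : Measurable V₂)
    (hV₁b : ∃ C, ∀ x, ‖V₁ x‖ ≤ C) (hV₂b : ∃ C, ∀ x, ‖V₂ x‖ ≤ C)
    (hV₁s : ∀ x ∉ Ω, V₁ x = 0) (hV₂s : ∀ x ∉ Ω, V₂ x = 0)
    (h : ∀ u₁ u₂ : EuclideanSpace ℝ (Fin n) → ℂ, Harmonic u₁ → Harmonic u₂ →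
      ∫ x in Ω, (V₁ x - V₂ x) * u₁ x * u₂ x = 0) :
    ∀ᵐ x ∂(volume.restrict Ω), V₁ x = V₂ x :=
  stmt0_general hn Ω hΩb V₁ V₂ hV₁m hV₂m hV₁b hV₂b hV₁s hV₂s h
end

section
/- Let n ≥ 2, let Ω ⊂ ℝⁿ be a bounded open set. The linear span of the set of restrictions to Ω of products u₁u₂, where u₁ and u₂ range over smooth complex-valued harmonic functions on ℝⁿ, is dense in L²(Ω, ℂ). -/
/-! If `a ⊥ b` and `‖a‖ = ‖b‖`, the exponential `x ↦ exp (⟪a, x⟫ + i ⟪b, x⟫)` is harmonic: its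
Laplacian is `‖a‖² - ‖b‖² + 2i ⟪a, b⟫ = 0` times itself. For `n ≥ 2` pick `η ⊥ t` with
`‖η‖ = ‖t‖ / 2`; then `a = ±η`, `b = t / 2` factor the plane wave `exp (i ⟪x, t⟫)` into two such
harmonic exponentials. Linear combinations of plane waves form a star subalgebra separating points,
so by Stone–Weierstrass they approximate any bounded continuous function uniformly on the compact
set `closure Ω`. Since `Ω` has finite measure, uniform approximation there is `L²` approximation,
and bounded continuous functions are dense in `L²(Ω)`. -/

open MeasureTheory

open Complex
open scoped RealInnerProductSpace

theorem exists_inner_eq_zero_and_norm_eq {E : Type*} [NormedAddCommGroup E]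
    [InnerProductSpace ℝ E] [FiniteDimensional ℝ E] (hE : 2 ≤ Module.finrank ℝ E) (v : E)
    {r : ℝ} (hr : 0 ≤ r) : ∃ w : E, ⟪w, v⟫ = 0 ∧ ‖w‖ = r := by
  have hspan : (ℝ ∙ v) ≠ ⊤ := fun h => by
    have := finrank_span_le_card (R := ℝ) ({v} : Set E)
    rw [h, finrank_top] at this
    simp only [Set.toFinset_singleton, Finset.card_singleton] at this
    omega
  obtain ⟨w, hw, hw0⟩ := Submodule.exists_mem_ne_zero_of_ne_bot
    (mt Submodule.orthogonal_eq_bot_iff.mp hspan)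
  refine ⟨(r * ‖w‖⁻¹) • w, ?_, ?_⟩
  · rw [real_inner_smul_left, Submodule.mem_orthogonal_singleton_iff_inner_left.mp hw, mul_zero]
  · exact norm_smul_inv_norm' (𝕜 := ℝ) hr hw0

section Harmonic

variable {n : ℕ}

theorem fderiv_cexp_clm_apply (L : EuclideanSpace ℝ (Fin n) →L[ℝ] ℂ)
    (v : EuclideanSpace ℝ (Fin n)) :
    (fun y => fderiv ℝ (fun y => cexp (L y)) y v) = fun y => cexp (L y) * L v := by
  funext y
  rw [L.hasFDerivAt.cexp.fderiv]
  simp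

theorem laplacian_cexp_clm (L : EuclideanSpace ℝ (Fin n) →L[ℝ] ℂ) (x : EuclideanSpace ℝ (Fin n)) :
    laplacian (fun y => cexp (L y)) x =
      cexp (L x) * ∑ i, L (EuclideanSpace.single i 1) ^ 2 := by
  simp only [laplacian, fderiv_cexp_clm_apply, Finset.mul_sum]
  refine Finset.sum_congr rfl fun i _ => ?_
  rw [(L.hasFDerivAt.cexp.mul_const _).fderiv]
  simp only [smul_apply, smul_eq_mul]
  ring

theorem harmonic_cexp_clm (L : EuclideanSpace ℝ (Fin n) →L[ℝ] ℂ)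
    (hL : ∑ i, L (EuclideanSpace.single i 1) ^ 2 = 0) : Harmonic fun y => cexp (L y) :=
  ⟨(contDiff_exp (𝕜 := ℝ)).comp L.contDiff,
    fun x => by rw [laplacian_cexp_clm, hL, mul_zero]⟩

theorem sum_sq_add_I_mul (a b : EuclideanSpace ℝ (Fin n)) :
    ∑ i, ((a i : ℂ) + I * b i) ^ 2 = ((‖a‖ ^ 2 - ‖b‖ ^ 2 : ℝ) : ℂ) + 2 * I * ⟪a, b⟫ := by
  simp only [← real_inner_self_eq_norm_sq, PiLp.inner_apply, RCLike.inner_apply, conj_trivial]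
  push_cast
  rw [Finset.mul_sum, ← Finset.sum_sub_distrib, ← Finset.sum_add_distrib]
  refine Finset.sum_congr rfl fun i _ => ?_
  ring_nf
  rw [I_sq]
  ring

theorem harmonic_cexp_inner_add_I_mul_inner (a b : EuclideanSpace ℝ (Fin n))
    (hab : ⟪a, b⟫ = 0) (hnorm : ‖a‖ = ‖b‖) :
    Harmonic fun x => cexp (⟪a, x⟫ + I * ⟪b, x⟫) := by
  let L : EuclideanSpace ℝ (Fin n) →L[ℝ] ℂ :=
    ofRealCLM.comp (innerSL ℝ a) + I • ofRealCLM.comp (innerSL ℝ b)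
  have hL : ∀ x, L x = ⟪a, x⟫ + I * ⟪b, x⟫ := fun x => by simp [L]
  simp only [← hL]
  refine harmonic_cexp_clm L ?_
  simp only [hL, EuclideanSpace.inner_single_right]
  simpa [hab, hnorm] using sum_sq_add_I_mul a b

theorem exists_harmonic_mul_eq_cexp_inner_mul_I (hn : 2 ≤ n) (t : EuclideanSpace ℝ (Fin n)) :
    ∃ u₁ u₂ : EuclideanSpace ℝ (Fin n) → ℂ, Harmonic u₁ ∧ Harmonic u₂ ∧
      ∀ x, u₁ x * u₂ x = cexp (⟪x, t⟫ * I) := by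
  set b : EuclideanSpace ℝ (Fin n) := (2⁻¹ : ℝ) • t
  obtain ⟨a, hat, ha⟩ := exists_inner_eq_zero_and_norm_eq
    (by rwa [finrank_euclideanSpace_fin]) t (norm_nonneg b)
  have hab : ⟪a, b⟫ = 0 := by rw [real_inner_smul_right, hat, mul_zero]
  refine ⟨fun x => cexp (⟪a, x⟫ + I * ⟪b, x⟫), fun x => cexp (⟪-a, x⟫ + I * ⟪b, x⟫),
    harmonic_cexp_inner_add_I_mul_inner a b hab ha,
    harmonic_cexp_inner_add_I_mul_inner (-a) b (by rw [inner_neg_left, hab, neg_zero])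
      (by rw [norm_neg, ha]), fun x => ?_⟩
  rw [← Complex.exp_add, inner_neg_left, real_inner_smul_left, real_inner_comm x t]
  push_cast
  ring_nf

end Harmonic

theorem ContinuousMap.exists_mem_starSubalgebra_near_of_isCompact_of_separatesPoints
    {𝕜 X : Type*} [RCLike 𝕜] [TopologicalSpace X] {A : StarSubalgebra 𝕜 C(X, 𝕜)}
    (hA : A.SeparatesPoints) (f : C(X, 𝕜)) {K : Set X} (hK : IsCompact K) {ε : ℝ}
    (hε : 0 < ε) : ∃ g ∈ A, ∀ x ∈ K, ‖g x - f x‖ < ε := by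
  have := isCompact_iff_compactSpace.mp hK
  let restrictK : C(X, 𝕜) →⋆ₐ[𝕜] C(K, 𝕜) :=
    compStarAlgHom' 𝕜 𝕜 ⟨Subtype.val, continuous_subtype_val⟩
  have hsep : (A.map restrictK).SeparatesPoints := by
    intro x y hxy
    obtain ⟨_, ⟨g, hgA, rfl⟩, hg⟩ := hA (Subtype.coe_ne_coe.mpr hxy)
    exact ⟨restrictK g, ⟨restrictK g, ⟨g, hgA, rfl⟩, rfl⟩, hg⟩
  have hfK : restrictK f ∈ (A.map restrictK).topologicalClosure := by
    rw [starSubalgebra_topologicalClosure_eq_top_of_separatesPoints _ hsep]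
    trivial
  obtain ⟨_, ⟨g, hgA, rfl⟩, hg⟩ := Metric.mem_closure_iff.mp hfK ε hε
  refine ⟨g, hgA, fun x hx => ?_⟩
  rw [← dist_eq_norm, dist_comm]
  exact (dist_apply_le_dist (f := restrictK f) (g := restrictK g) ⟨x, hx⟩).trans_lt hg

open BoundedContinuousFunction

section Lp

variable {X : Type*} [TopologicalSpace X] [MeasurableSpace X] [BorelSpace X]
  {μ : Measure X} [IsFiniteMeasure μ] {p : ENNReal} [Fact (1 ≤ p)] {K : Set X}

theorem BoundedContinuousFunction.norm_toLp_le_of_forall_mem_norm_le {E 𝕜 : Type*}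
    [NormedAddCommGroup E] [SecondCountableTopologyEither X E] [NormedRing 𝕜] [Module 𝕜 E]
    [IsBoundedSMul 𝕜 E] (hμK : ∀ᵐ x ∂μ, x ∈ K) {f : X →ᵇ E} {δ : ℝ} (hδ : 0 ≤ δ)
    (hf : ∀ x ∈ K, ‖f x‖ ≤ δ) :
    ‖toLp p μ 𝕜 f‖ ≤ measureUnivNNReal μ ^ p.toReal⁻¹ * δ :=
  Lp.norm_le_of_ae_bound hδ <| by
    filter_upwards [coeFn_toLp p μ 𝕜 f, hμK] with x hx hxK
    rw [hx]
    exact hf x hxK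

theorem BoundedContinuousFunction.dense_toLp_image_of_separatesPoints [NormalSpace X]
    [μ.WeaklyRegular] (hp : p ≠ ⊤) (hK : IsCompact K) (hμK : ∀ᵐ x ∂μ, x ∈ K)
    {A : StarSubalgebra ℂ (X →ᵇ ℂ)} (hA : (A.map (toContinuousMapStarₐ ℂ)).SeparatesPoints) :
    Dense (toLp p μ ℂ '' (A : Set (X →ᵇ ℂ))) := by
  refine Dense.of_closure ((toLp_denseRange ℂ μ ℂ hp).mono ?_)
  rintro _ ⟨f, rfl⟩
  refine Metric.mem_closure_iff.mpr fun ε hε => ?_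
  obtain ⟨δ, hδ, hCδ⟩ := exists_pos_mul_lt hε (measureUnivNNReal μ ^ p.toReal⁻¹ : ℝ)
  obtain ⟨_, ⟨g, hgA, rfl⟩, hg⟩ :=
    ContinuousMap.exists_mem_starSubalgebra_near_of_isCompact_of_separatesPoints hA
      f.toContinuousMap hK hδ
  refine ⟨toLp p μ ℂ g, ⟨g, hgA, rfl⟩, ?_⟩
  rw [dist_eq_norm, ← map_sub]
  refine (norm_toLp_le_of_forall_mem_norm_le hμK hδ.le fun x hx => ?_).trans_lt hCδ
  rw [sub_apply, norm_sub_rev]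
  exact (hg x hx).le

end Lp

theorem BoundedContinuousFunction.mem_span_range_char_of_mem_charPoly {V W : Type*}
    [AddCommGroup V] [Module ℝ V] [TopologicalSpace V] [AddCommGroup W] [Module ℝ W]
    [TopologicalSpace W] {e : AddChar ℝ Circle} {L : V →ₗ[ℝ] W →ₗ[ℝ] ℝ} {he : Continuous e}
    {hL : Continuous fun p : V × W ↦ L p.1 p.2} {f : V →ᵇ ℂ} (hf : f ∈ charPoly he hL) :
    f ∈ Submodule.span ℂ (Set.range (char he hL)) := by
  obtain ⟨w, hw⟩ := (mem_charPoly f).mp hf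
  have hsum : f = ∑ a ∈ w.coeff.support, w.coeff a • char he hL a := by
    ext x
    simp [hw, Finsupp.sum]
  rw [hsum]
  exact Submodule.sum_mem _ fun a _ => Submodule.smul_mem _ _ (Submodule.subset_span ⟨a, rfl⟩)

theorem stmt5_general {n : ℕ} (hn : 2 ≤ n) (Ω : Set (EuclideanSpace ℝ (Fin n)))
    (hΩb : Bornology.IsBounded Ω) :
    Dense (↑(Submodule.span ℂ
      {F : Lp ℂ 2 (volume.restrict Ω) |
        ∃ u₁ u₂ : EuclideanSpace ℝ (Fin n) → ℂ, Harmonic u₁ ∧ Harmonic u₂ ∧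
          (F : EuclideanSpace ℝ (Fin n) → ℂ) =ᵐ[volume.restrict Ω]
            fun x => u₁ x * u₂ x}) : Set (Lp ℂ 2 (volume.restrict Ω))) := by
  set μ := volume.restrict Ω
  have : IsFiniteMeasure μ := isFiniteMeasure_restrict.mpr hΩb.measure_lt_top.ne
  have hμK : ∀ᵐ x ∂μ, x ∈ closure Ω := ae_restrict_of_ae_restrict_of_subset subset_closure
    (ae_restrict_mem isClosed_closure.measurableSet)
  have hsep := separatesPoints_charPoly Real.continuous_probChar Real.probChar_ne_one
    (L := innerₗ (EuclideanSpace ℝ (Fin n))) continuous_inner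
    fun v hv => DFunLike.ne_iff.mpr ⟨v, inner_self_ne_zero.mpr hv⟩
  refine (dense_toLp_image_of_separatesPoints (p := 2) ENNReal.ofNat_ne_top
    hΩb.isCompact_closure hμK hsep).mono ?_
  rintro _ ⟨f, hf, rfl⟩
  let toLpₗ := (toLp (E := ℂ) 2 μ ℂ).toLinearMap
  refine (Submodule.map_span_le toLpₗ _ _).mpr ?_
    (Submodule.mem_map_of_mem (f := toLpₗ) (mem_span_range_char_of_mem_charPoly hf))
  rintro _ ⟨t, rfl⟩
  obtain ⟨u₁, u₂, h₁, h₂, hu⟩ := exists_harmonic_mul_eq_cexp_inner_mul_I hn t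
  refine Submodule.subset_span ⟨u₁, u₂, h₁, h₂, ?_⟩
  filter_upwards [coeFn_toLp 2 μ ℂ (innerProbChar t)] with x hx
  exact hx.trans (hu x).symm

/-- The linear span, inside `L²(Ω, ℂ)`, of (restrictions to `Ω` of) products `u₁ u₂` of
smooth harmonic functions on `ℝⁿ` is dense. -/
theorem stmt5 {n : ℕ} (hn : 2 ≤ n) (Ω : Set (EuclideanSpace ℝ (Fin n)))
    (hΩo : IsOpen Ω) (hΩb : Bornology.IsBounded Ω) :
    Dense (↑(Submodule.span ℂ
      {F : Lp ℂ 2 (volume.restrict Ω) |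
        ∃ u₁ u₂ : EuclideanSpace ℝ (Fin n) → ℂ, Harmonic u₁ ∧ Harmonic u₂ ∧
          (F : EuclideanSpace ℝ (Fin n) → ℂ) =ᵐ[volume.restrict Ω]
            fun x => u₁ x * u₂ x}) : Set (Lp ℂ 2 (volume.restrict Ω))) :=
  stmt5_general hn Ω hΩb
end

section
/- Let n ≥ 2 and k > 0, and let g ∈ L²(S^{n−1}) be a complex-valued square-integrable function on the unit sphere with respect to the surface measure. If the Herglotz wave v_g(x) = ∫_{S^{n−1}} exp(i k x·d) g(d) ds(d) vanishes for all x in some nonempty open subset of ℝⁿ, then g = 0 almost everywhere on S^{n−1} with respect to the surface measure. -/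
/-!
For `x₀ ∈ U` and any `x`, the function `t ↦ v_g (x₀ + t (x - x₀))` is the restriction to `ℝ` of an
entire function of `t ∈ ℂ`; it vanishes near `t = 0`, hence everywhere, so `v_g ≡ 0` on `ℝⁿ`.
Since `v_g (-x)` is the `L²` inner product of the plane wave `d ↦ exp (i k x·d)` with `g`, the
function `g` is then orthogonal to all plane waves. For `k ≠ 0` the plane waves span a star
subalgebra of `C(S^{n-1}, ℂ)` that separates points, which is dense by Stone–Weierstrass; as
continuous functions are dense in `L²`, `g = 0`.
-/

open MeasureTheory Metric Filter Topology Complex Set Submodule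
open scoped InnerProductSpace

section Entire

lemma norm_cexp_mul_le {z u : ℂ} {C : ℝ} (hu : ‖u‖ ≤ C) : ‖cexp (z * u)‖ ≤ Real.exp (‖z‖ * C) :=
  (norm_exp_le_exp_norm _).trans <| Real.exp_le_exp.2 <| by
    rw [norm_mul]; exact mul_le_mul_of_nonneg_left hu (norm_nonneg z)

variable {α : Type*} [MeasurableSpace α] {μ : Measure α} {w g : α → ℂ} {C : ℝ}

lemma integrable_cexp_mul_mul (hw : AEStronglyMeasurable w μ) (hwC : ∀ a, ‖w a‖ ≤ C)
    (hg : Integrable g μ) (z : ℂ) : Integrable (fun a => cexp (z * w a) * g a) μ :=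
  hg.bdd_mul (continuous_exp.comp_aestronglyMeasurable (hw.const_mul z))
    (.of_forall fun a => norm_cexp_mul_le (hwC a))

theorem differentiable_integral_cexp_mul_mul (hw : AEStronglyMeasurable w μ)
    (hwC : ∀ a, ‖w a‖ ≤ C) (hg : Integrable g μ) :
    Differentiable ℂ fun z => ∫ a, cexp (z * w a) * g a ∂μ := by
  intro z₀
  refine (hasDerivAt_integral_of_dominated_loc_of_deriv_le
    (F' := fun z a => cexp (z * w a) * w a * g a)
    (bound := fun a => Real.exp ((‖z₀‖ + 1) * C) * C * ‖g a‖) (ball_mem_nhds z₀ one_pos)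
    (.of_forall fun z => (integrable_cexp_mul_mul hw hwC hg z).aestronglyMeasurable)
    (integrable_cexp_mul_mul hw hwC hg z₀)
    (((continuous_exp.comp_aestronglyMeasurable (hw.const_mul z₀)).mul hw).mul
      hg.aestronglyMeasurable)
    (.of_forall fun a z hz => ?_) (hg.norm.const_mul _)
    (.of_forall fun a z _ => ?_)).2.differentiableAt
  · have hz : ‖z‖ ≤ ‖z₀‖ + 1 := by
      simpa using (norm_le_norm_add_norm_sub' z z₀).trans
        (add_le_add_right (mem_ball_iff_norm.1 hz).le _)
    have hC : 0 ≤ C := (norm_nonneg _).trans (hwC a)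
    rw [norm_mul, norm_mul]
    gcongr
    · exact (norm_cexp_mul_le (hwC a)).trans (Real.exp_le_exp.2 (by gcongr))
    · exact hwC a
  · simpa using ((hasDerivAt_mul_const (w a)).cexp.mul_const (g a))

end Entire

section PlaneWave

variable {E : Type*} [NormedAddCommGroup E] [InnerProductSpace ℝ E] (k : ℝ)

noncomputable def planeWave (x : E) : C(E, ℂ) :=
  ⟨fun d => cexp (I * k * ⟪x, d⟫_ℝ), by fun_prop⟩

@[simp] lemma planeWave_apply (x d : E) : planeWave k x d = cexp (I * k * ⟪x, d⟫_ℝ) := rfl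

lemma norm_planeWave_apply (x d : E) : ‖planeWave k x d‖ = 1 := by
  rw [planeWave_apply, norm_exp, mul_comm I, mul_comm, ← mul_assoc]
  norm_cast
  simp

@[simp] lemma planeWave_zero : planeWave k (0 : E) = 1 := by
  ext d; simp

lemma planeWave_add (x y : E) : planeWave k (x + y) = planeWave k x * planeWave k y := by
  ext d; simp [inner_add_left, ← Complex.exp_add, mul_add]

lemma planeWave_add_smul_apply (x e d : E) (t : ℝ) :
    planeWave k (x + t • e) d = cexp (t * (I * k * ⟪e, d⟫_ℝ)) * planeWave k x d := by
  simp only [planeWave_apply, inner_add_left, real_inner_smul_left, ofReal_add, ofReal_mul]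
  rw [← exp_add]
  ring_nf

lemma planeWave_apply_add (x d d' : E) :
    planeWave k x (d + d') = planeWave k x d * planeWave k x d' := by
  simp [inner_add_right, ← Complex.exp_add, mul_add]

lemma star_planeWave (x : E) : star (planeWave k x) = planeWave k (-x) := by
  ext d
  simp [← Complex.exp_conj, inner_neg_left]

variable {k}

lemma planeWave_smul_self (hk : k ≠ 0) {v : E} (hv : v ≠ 0) :
    planeWave k ((Real.pi / (k * ‖v‖ ^ 2)) • v) v = -1 := by
  have : k * ⟪(Real.pi / (k * ‖v‖ ^ 2)) • v, v⟫_ℝ = Real.pi := by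
    rw [real_inner_smul_left, real_inner_self_eq_norm_sq]
    field_simp
  rw [planeWave_apply, mul_assoc, ← ofReal_mul, this, mul_comm, exp_pi_mul_I]

lemma exists_planeWave_apply_ne (hk : k ≠ 0) {d d' : E} (h : d ≠ d') :
    ∃ x, planeWave k x d ≠ planeWave k x d' := by
  set x := (Real.pi / (k * ‖d - d'‖ ^ 2)) • (d - d')
  have hflip : planeWave k x d = -planeWave k x d' := by
    rw [← sub_add_cancel d d', planeWave_apply_add, planeWave_smul_self hk (sub_ne_zero.2 h),
      neg_one_mul]
  refine ⟨x, fun heq => ?_⟩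
  have h0 : planeWave k x d' = 0 := by linear_combination (hflip - heq) / 2
  simpa [h0] using norm_planeWave_apply k x d'

variable (k) (K : Set E)

noncomputable def planeWaveSubalgebra : StarSubalgebra ℂ C(K, ℂ) where
  toSubalgebra := Algebra.adjoin ℂ (range fun x => (planeWave k x).restrict K)
  star_mem' := by
    change Algebra.adjoin ℂ _ ≤ star (Algebra.adjoin ℂ _)
    refine Algebra.adjoin_le ?_
    rintro - ⟨x, rfl⟩
    exact Algebra.subset_adjoin ⟨-x, by ext d; simp [← star_planeWave]⟩

lemma planeWaveSubalgebra_toSubmodule :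
    Subalgebra.toSubmodule (planeWaveSubalgebra k K).toSubalgebra =
      span ℂ (range fun x => (planeWave k x).restrict K) := by
  refine Algebra.adjoin_eq_span_of_subset ℂ (Subset.trans ?_ subset_span)
  intro f hf
  refine Submonoid.closure_induction (fun _ => id) ⟨0, by ext d; simp⟩ ?_ hf
  rintro - - - - ⟨x, rfl⟩ ⟨y, rfl⟩
  exact ⟨x + y, by ext d; simp [planeWave_add]⟩

variable {k}

lemma planeWaveSubalgebra_separatesPoints (hk : k ≠ 0) :
    (planeWaveSubalgebra k K).SeparatesPoints := by
  intro d d' hdd'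
  obtain ⟨x, hx⟩ := exists_planeWave_apply_ne hk (Subtype.coe_injective.ne hdd')
  exact ⟨_, ⟨_, Algebra.subset_adjoin ⟨x, rfl⟩, rfl⟩, hx⟩

theorem span_planeWave_closure_eq_top [CompactSpace K] (hk : k ≠ 0) :
    (span ℂ (range fun x => (planeWave k x).restrict K)).topologicalClosure = ⊤ := by
  rw [← planeWaveSubalgebra_toSubmodule]
  exact congr_arg (Subalgebra.toSubmodule <| StarSubalgebra.toSubalgebra ·)
    (ContinuousMap.starSubalgebra_topologicalClosure_eq_top_of_separatesPoints _
      (planeWaveSubalgebra_separatesPoints K hk))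

end PlaneWave

section Herglotz

variable {E : Type*} [NormedAddCommGroup E] [InnerProductSpace ℝ E] [MeasurableSpace E]
  {K : Set E}

noncomputable def herglotzWave (μ : Measure K) (k : ℝ) (g : K → ℂ) (x : E) : ℂ :=
  ∫ d, planeWave k x d * g d ∂μ

variable [BorelSpace E] {μ : Measure K} {k : ℝ} {g : K → ℂ}

theorem exists_differentiable_eq_herglotzWave_line (hK : Bornology.IsBounded K)
    (hg : Integrable g μ) (x₀ e : E) :
    ∃ F : ℂ → ℂ, Differentiable ℂ F ∧ ∀ t : ℝ, F t = herglotzWave μ k g (x₀ + t • e) := by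
  obtain ⟨R, hR⟩ := hK.exists_norm_le
  refine ⟨fun z => ∫ d, cexp (z * (I * k * ⟪e, (d : E)⟫_ℝ)) * (planeWave k x₀ d * g d) ∂μ,
    differentiable_integral_cexp_mul_mul (C := |k| * (‖e‖ * R))
      (by fun_prop : Continuous fun d : K => I * k * ⟪e, (d : E)⟫_ℝ).aestronglyMeasurable
      (fun d => ?_) (hg.bdd_mul
        (by fun_prop : Continuous fun d : K => planeWave k x₀ d).aestronglyMeasurable
        (.of_forall fun d => (norm_planeWave_apply k x₀ d).le)),
    fun t => integral_congr_ae (.of_forall fun d => ?_)⟩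
  · simp only [norm_mul, norm_I, one_mul, norm_real, Real.norm_eq_abs]
    exact mul_le_mul_of_nonneg_left ((abs_real_inner_le_norm _ _).trans
      (mul_le_mul_of_nonneg_left (hR d d.2) (norm_nonneg e))) (abs_nonneg k)
  · simp only [planeWave_add_smul_apply, mul_assoc]

theorem herglotzWave_eq_zero_of_eqOn_zero (hK : Bornology.IsBounded K) (hg : Integrable g μ)
    {U : Set E} (hU : IsOpen U) {x₀ : E} (hx₀ : x₀ ∈ U) (hv : EqOn (herglotzWave μ k g) 0 U) :
    herglotzWave μ k g = 0 := by
  funext x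
  obtain ⟨F, hF, hline⟩ := exists_differentiable_eq_herglotzWave_line hK hg x₀ (x - x₀)
  have hnear : ∀ᶠ t : ℝ in 𝓝 0, F t = 0 := by
    have : Tendsto (fun t : ℝ => x₀ + t • (x - x₀)) (𝓝 0) (𝓝 x₀) :=
      (continuous_const.add (continuous_id.smul continuous_const)).tendsto' 0 x₀ (by simp)
    filter_upwards [this (hU.mem_nhds hx₀)] with t ht
    rw [hline]; exact hv ht
  have hofReal : Tendsto ofReal (𝓝[≠] 0) (𝓝[≠] 0) :=
    continuous_ofReal.continuousWithinAt.tendsto_nhdsWithin fun _ ht ↦ ofReal_ne_zero.2 ht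
  have hfreq : ∃ᶠ z in 𝓝[≠] (0 : ℂ), F z = 0 :=
    hofReal.frequently (hnear.filter_mono nhdsWithin_le_nhds).frequently
  have hF0 : EqOn F 0 univ :=
    (analyticOnNhd_univ_iff_differentiable.2 hF).eqOn_zero_of_preconnected_of_frequently_eq_zero
      isPreconnected_univ (mem_univ 0) hfreq
  simpa only [hline, one_smul, add_sub_cancel, Pi.zero_apply] using hF0 (mem_univ ((1 : ℝ) : ℂ))

variable [CompactSpace K] [IsFiniteMeasure μ]

lemma inner_toLp_planeWave (hg : MemLp g 2 μ) (x : E) :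
    ⟪ContinuousMap.toLp 2 μ ℂ ((planeWave k x).restrict K), hg.toLp g⟫_ℂ =
      herglotzWave μ k g (-x) := by
  rw [L2.inner_def, herglotzWave]
  refine integral_congr_ae ?_
  filter_upwards [ContinuousMap.coeFn_toLp (p := 2) (𝕜 := ℂ) μ ((planeWave k x).restrict K),
    hg.coeFn_toLp] with d h₁ h₂
  rw [h₁, h₂, ← star_planeWave]
  simp [mul_comm]

variable [μ.WeaklyRegular]

theorem span_planeWaveLp_closure_eq_top (hk : k ≠ 0) :
    (span ℂ (range fun x =>
      ContinuousMap.toLp 2 μ ℂ ((planeWave k x).restrict K))).topologicalClosure = ⊤ := by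
  have := (ContinuousMap.toLp_denseRange (p := 2) ℂ μ ℂ ENNReal.ofNat_ne_top
    ).topologicalClosure_map_submodule (span_planeWave_closure_eq_top K hk)
  rwa [map_span, ← range_comp] at this

theorem ae_eq_zero_of_herglotzWave_eq_zero (hk : k ≠ 0) (hg : MemLp g 2 μ)
    (hv : herglotzWave μ k g = 0) : g =ᵐ[μ] 0 := by
  have hperp : span ℂ (range fun x => ContinuousMap.toLp 2 μ ℂ ((planeWave k x).restrict K)) ≤
      (ℂ ∙ hg.toLp g)ᗮ := by
    refine span_le.2 ?_
    rintro - ⟨x, rfl⟩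
    exact mem_orthogonal_singleton_iff_inner_left.2
      ((inner_toLp_planeWave hg x).trans (congrFun hv _))
  have hG : hg.toLp g ∈ (ℂ ∙ hg.toLp g)ᗮ := by
    have := topologicalClosure_minimal _ hperp (isClosed_orthogonal _)
    rw [span_planeWaveLp_closure_eq_top hk] at this
    exact this trivial
  have hG0 : hg.toLp g = 0 := inner_self_eq_zero.1 (mem_orthogonal_singleton_iff_inner_left.1 hG)
  exact hg.coeFn_toLp.symm.trans (hG0 ▸ Lp.coeFn_zero ℂ 2 μ)

end Herglotz

theorem stmt9_general {n : ℕ} (k : ℝ) (hk : 0 < k)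
    (g : sphere (0 : EuclideanSpace ℝ (Fin n)) 1 → ℂ)
    (hg : MemLp g 2 (volume : Measure (EuclideanSpace ℝ (Fin n))).toSphere)
    (U : Set (EuclideanSpace ℝ (Fin n))) (hU : IsOpen U) (hUne : U.Nonempty)
    (hvg : ∀ x ∈ U,
      ∫ d, Complex.exp (Complex.I * k *
          ((∑ i, x i * (d : EuclideanSpace ℝ (Fin n)) i : ℝ) : ℂ)) * g d
        ∂(volume : Measure (EuclideanSpace ℝ (Fin n))).toSphere = 0) :
    g =ᵐ[(volume : Measure (EuclideanSpace ℝ (Fin n))).toSphere] 0 := by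
  have hsum (x d : EuclideanSpace ℝ (Fin n)) : ∑ i, x i * d i = ⟪x, d⟫_ℝ := by
    simp [PiLp.inner_apply, mul_comm]
  have hv : EqOn (herglotzWave _ k g) 0 U := fun x hx => by
    simpa [herglotzWave, hsum] using hvg x hx
  obtain ⟨x₀, hx₀⟩ := hUne
  exact ae_eq_zero_of_herglotzWave_eq_zero hk.ne' hg <|
    herglotzWave_eq_zero_of_eqOn_zero isBounded_sphere (hg.integrable one_le_two) hU hx₀ hv

/-- Injectivity of the Herglotz operator: if the Herglotz wave
`v_g(x) = ∫_{S^{n-1}} e^{ikx·d} g(d) ds(d)` with density `g ∈ L²(S^{n-1})` vanishes on a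
nonempty open subset of `ℝⁿ`, then `g = 0` a.e. on the sphere. -/
theorem stmt9 {n : ℕ} (hn : 2 ≤ n) (k : ℝ) (hk : 0 < k)
    (g : sphere (0 : EuclideanSpace ℝ (Fin n)) 1 → ℂ)
    (hg : MemLp g 2 (volume : Measure (EuclideanSpace ℝ (Fin n))).toSphere)
    (U : Set (EuclideanSpace ℝ (Fin n))) (hU : IsOpen U) (hUne : U.Nonempty)
    (hvg : ∀ x ∈ U,
      ∫ d, Complex.exp (Complex.I * k *
          ((∑ i, x i * (d : EuclideanSpace ℝ (Fin n)) i : ℝ) : ℂ)) * g d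
        ∂(volume : Measure (EuclideanSpace ℝ (Fin n))).toSphere = 0) :
    g =ᵐ[(volume : Measure (EuclideanSpace ℝ (Fin n))).toSphere] 0 :=
  stmt9_general k hk g hg U hU hUne hvg
end
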